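/- arXiv:2605.10299 — 6 statements merged into one kernel-verified Lean document; each statement's English description precedes it below -/
import Mathlib

section
/- Fix T ∈ ℕ₊, λ > 0, a finite set X, a feature map ψ: X → ℝ^N, and a probability mass function P on X. Let G = Σ_{x∈X} P(x) ψ(x)ψ(x)ᵀ + (λ/T) I_N. Then for any z ∈ X, ψ(z)ᵀ G⁻¹ ψ(z) ≤ (T/λ) · E[ λ ψ(z)ᵀ (Σ_{i=1}^T ψ(x^{(i)})ψ(x^{(i)})ᵀ + λ I_N)⁻¹ ψ(z) ], where x^{(1)}, …, x^{(T)} are drawn i.i.d. from P. -/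
/-!
Averaging the sample matrix `Σᵢ ψ(xᵢ)ψ(xᵢ)ᵀ + λI` over the i.i.d. sample gives exactly `T • G`,
so the claim is Jensen's inequality for `M ↦ vᵀ M⁻¹ v`. Its convexity comes from the variational
formula `vᵀ M⁻¹ v = max_u (2 uᵀv - uᵀ M u)`: the maximiser `u` for the mean matrix is a
competitor for every sample matrix, and `u ↦ 2 uᵀv - uᵀ M u` is affine in `M`.
-/

open Matrix Finset

section InverseQuadraticForm

variable {n ι : Type*} [Fintype n] [DecidableEq n]

theorem Matrix.PosDef.mulVec_inv_mulVec {M : Matrix n n ℝ} (hM : M.PosDef) (v : n → ℝ) :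
    M *ᵥ (M⁻¹ *ᵥ v) = v := by
  rw [mulVec_mulVec, mul_nonsing_inv _ hM.det_pos.ne'.isUnit, one_mulVec]

-- Expand `(M⁻¹ v - u)ᵀ M (M⁻¹ v - u) ≥ 0`.
theorem Matrix.PosDef.two_mul_dotProduct_sub_le_dotProduct_inv_mulVec {M : Matrix n n ℝ}
    (hM : M.PosDef) (u v : n → ℝ) :
    2 * (u ⬝ᵥ v) - u ⬝ᵥ (M *ᵥ u) ≤ v ⬝ᵥ (M⁻¹ *ᵥ v) := by
  set a := M⁻¹ *ᵥ v
  have hMa : M *ᵥ a = v := hM.mulVec_inv_mulVec v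
  have hsymm : Mᵀ = M := hM.isHermitian
  have hcross : a ⬝ᵥ (M *ᵥ u) = v ⬝ᵥ u := by
    rw [dotProduct_mulVec, ← mulVec_transpose, hsymm, hMa]
  have := hM.posSemidef.dotProduct_mulVec_nonneg (a - u)
  simp only [star_trivial, mulVec_sub, hMa, sub_dotProduct, dotProduct_sub, hcross] at this
  rw [dotProduct_comm a v, dotProduct_comm v u] at this
  linarith

omit [Fintype n] [DecidableEq n] in
theorem Matrix.posDef_sum_smul {w : ι → ℝ} {s : Finset ι} (hw0 : ∀ i ∈ s, 0 ≤ w i)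
    (hw1 : ∑ i ∈ s, w i = 1) {M : ι → Matrix n n ℝ} (hM : ∀ i ∈ s, (M i).PosDef) :
    (∑ i ∈ s, w i • M i).PosDef := by
  classical
  obtain ⟨i, hi, hwi⟩ := Finset.exists_ne_zero_of_sum_ne_zero (hw1.symm ▸ one_ne_zero)
  rw [← Finset.add_sum_erase s _ hi]
  refine ((hM i hi).smul (lt_of_le_of_ne (hw0 i hi) hwi.symm)).add_posSemidef ?_
  exact posSemidef_sum _ fun j hj =>
    (hM j (Finset.mem_of_mem_erase hj)).posSemidef.smul (hw0 j (Finset.mem_of_mem_erase hj))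

theorem dotProduct_inv_sum_smul_mulVec_le {w : ι → ℝ} {s : Finset ι} (hw0 : ∀ i ∈ s, 0 ≤ w i)
    (hw1 : ∑ i ∈ s, w i = 1) {M : ι → Matrix n n ℝ} (hM : ∀ i ∈ s, (M i).PosDef) (v : n → ℝ) :
    v ⬝ᵥ ((∑ i ∈ s, w i • M i)⁻¹ *ᵥ v) ≤ ∑ i ∈ s, w i * (v ⬝ᵥ ((M i)⁻¹ *ᵥ v)) := by
  set u := (∑ i ∈ s, w i • M i)⁻¹ *ᵥ v
  have hu : ∑ i ∈ s, w i * (u ⬝ᵥ (M i *ᵥ u)) = u ⬝ᵥ v := by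
    conv_rhs => rw [← (posDef_sum_smul hw0 hw1 hM).mulVec_inv_mulVec v]
    simp only [sum_mulVec, dotProduct_sum, smul_mulVec, dotProduct_smul, smul_eq_mul, u]
  calc v ⬝ᵥ u = ∑ i ∈ s, w i * (2 * (u ⬝ᵥ v) - u ⬝ᵥ (M i *ᵥ u)) := by
        rw [dotProduct_comm]
        simp only [mul_sub, sum_sub_distrib, ← sum_mul, hw1, hu]
        ring
    _ ≤ ∑ i ∈ s, w i * (v ⬝ᵥ ((M i)⁻¹ *ᵥ v)) := by
        gcongr with i hi
        · exact hw0 i hi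
        · exact (hM i hi).two_mul_dotProduct_sub_le_dotProduct_inv_mulVec u v

theorem Matrix.posDef_sum_smul_vecMulVec_add_smul_one [Fintype ι] {c : ι → ℝ}
    (hc : ∀ i, 0 ≤ c i) (f : ι → n → ℝ) {μ : ℝ} (hμ : 0 < μ) :
    (∑ i, c i • vecMulVec (f i) (f i) + μ • (1 : Matrix n n ℝ)).PosDef := by
  have hf : ∀ i, (vecMulVec (f i) (f i)).PosSemidef := fun i => by
    simpa using posSemidef_vecMulVec_self_star (f i)
  exact PosDef.posSemidef_add (posSemidef_sum _ fun i _ => (hf i).smul (hc i))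
    (PosDef.one.smul hμ)

end InverseQuadraticForm

section ProductWeights

variable {X ι R : Type*} [Fintype X] [Fintype ι] [DecidableEq ι] [CommSemiring R] {P : X → R}

theorem sum_prod_eq_one (hP : ∑ x, P x = 1) : ∑ xs : ι → X, ∏ j, P (xs j) = 1 := by
  rw [← Fintype.prod_sum fun _ x => P x, hP, prod_const_one]

theorem sum_prod_mul_apply (hP : ∑ x, P x = 1) (g : X → R) (i : ι) :
    ∑ xs : ι → X, (∏ j, P (xs j)) * g (xs i) = ∑ x, P x * g x := by
  have hsplit : ∀ xs : ι → X,
      (∏ j, P (xs j)) * g (xs i) = ∏ j, P (xs j) * if j = i then g (xs j) else 1 := by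
    intro xs
    rw [prod_mul_distrib, prod_ite_eq' univ i, if_pos (mem_univ i)]
  simp_rw [hsplit, ← Fintype.prod_sum fun j x => P x * if j = i then g x else 1]
  rw [Fintype.prod_eq_single i fun j hj => by simp [hj, hP]]
  simp

theorem sum_prod_smul_apply {E : Type*} [AddCommMonoid E] [Module R E]
    (hP : ∑ x, P x = 1) (g : X → E) (i : ι) :
    ∑ xs : ι → X, (∏ j, P (xs j)) • g (xs i) = ∑ x, P x • g x := by
  classical
  have hmarginal : ∀ x, ∑ xs : ι → X, (∏ j, P (xs j)) * (if xs i = x then 1 else 0) = P x := fun x => by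
    simpa using sum_prod_mul_apply hP (fun y => if y = x then (1 : R) else 0) i
  calc ∑ xs : ι → X, (∏ j, P (xs j)) • g (xs i)
      = ∑ xs : ι → X, ∑ x, ((∏ j, P (xs j)) * if xs i = x then 1 else 0) • g x := by
        simp
    _ = ∑ x, P x • g x := by
        rw [sum_comm]
        simp_rw [← sum_smul, hmarginal]

theorem sum_prod_smul_sum_add {E : Type*} [AddCommMonoid E] [Module R E]
    (hP : ∑ x, P x = 1) (g : X → E) (c : E) :
    ∑ xs : ι → X, (∏ j, P (xs j)) • (∑ i, g (xs i) + c) = Fintype.card ι • ∑ x, P x • g x + c := by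
  simp_rw [smul_add, sum_add_distrib, ← sum_smul, sum_prod_eq_one hP, one_smul, smul_sum]
  rw [sum_comm]
  simp only [sum_prod_smul_apply hP]
  rw [sum_const, card_univ, smul_sum]

end ProductWeights

/-- Jensen-type inequality: `ψ(z)ᵀ G⁻¹ ψ(z) ≤ (T/λ) E[λ ψ(z)ᵀ (Σᵢ ψ(x⁽ⁱ⁾)ψ(x⁽ⁱ⁾)ᵀ + λI)⁻¹ ψ(z)]`,
where `G = Σ_x P(x) ψ(x)ψ(x)ᵀ + (λ/T) I` and the expectation is over `x⁽¹⁾,…,x⁽ᵀ⁾` i.i.d. `∼ P`. -/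
theorem stmt_4 {X : Type*} [Fintype X] {N : ℕ} (T : ℕ) (hT : 0 < T)
    (lam : ℝ) (hlam : 0 < lam)
    (ψ : X → Fin N → ℝ) (P : X → ℝ) (hP0 : ∀ x, 0 ≤ P x) (hP1 : ∑ x, P x = 1)
    (z : X) :
    ψ z ⬝ᵥ ((∑ x, P x • vecMulVec (ψ x) (ψ x) +
        (lam / (T : ℝ)) • (1 : Matrix (Fin N) (Fin N) ℝ))⁻¹ *ᵥ ψ z) ≤
      ((T : ℝ) / lam) * ∑ xs : Fin T → X, (∏ i, P (xs i)) *
        (lam * (ψ z ⬝ᵥ ((∑ i, vecMulVec (ψ (xs i)) (ψ (xs i)) +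
          lam • (1 : Matrix (Fin N) (Fin N) ℝ))⁻¹ *ᵥ ψ z))) := by
  have hT' : (0 : ℝ) < T := Nat.cast_pos.mpr hT
  set G := ∑ x, P x • vecMulVec (ψ x) (ψ x) + (lam / (T : ℝ)) • (1 : Matrix (Fin N) (Fin N) ℝ)
  set M := fun xs : Fin T → X => ∑ i, vecMulVec (ψ (xs i)) (ψ (xs i)) +
    lam • (1 : Matrix (Fin N) (Fin N) ℝ)
  have hG : G.PosDef := posDef_sum_smul_vecMulVec_add_smul_one hP0 ψ (div_pos hlam hT')
  have hM : ∀ xs, (M xs).PosDef := fun xs => by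
    simpa using posDef_sum_smul_vecMulVec_add_smul_one (fun _ => zero_le_one) (ψ ∘ xs) hlam
  have hmean : ∑ xs, (∏ i, P (xs i)) • M xs = (T : ℝ) • G := by
    refine (sum_prod_smul_sum_add hP1 (fun x => vecMulVec (ψ x) (ψ x)) _).trans ?_
    rw [Fintype.card_fin, smul_add, smul_smul, mul_div_cancel₀ _ hT'.ne', Nat.cast_smul_eq_nsmul]
  have hjensen := dotProduct_inv_sum_smul_mulVec_le
    (fun xs _ => prod_nonneg fun i _ => hP0 (xs i)) (sum_prod_eq_one hP1) (fun xs _ => hM xs) (ψ z)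
  rw [hmean] at hjensen
  calc ψ z ⬝ᵥ (G⁻¹ *ᵥ ψ z) = T * (ψ z ⬝ᵥ (((T : ℝ) • G)⁻¹ *ᵥ ψ z)) := by
        have hinv : ((T : ℝ) • G)⁻¹ = (T : ℝ)⁻¹ • G⁻¹ := by
          simpa [Units.smul_def] using inv_smul' G (Units.mk0 (T : ℝ) hT'.ne') hG.det_pos.ne'.isUnit
        rw [hinv, smul_mulVec, dotProduct_smul, smul_eq_mul, mul_inv_cancel_left₀ hT'.ne']
    _ ≤ T * ∑ xs : Fin T → X, (∏ i, P (xs i)) * (ψ z ⬝ᵥ ((M xs)⁻¹ *ᵥ ψ z)) :=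
        mul_le_mul_of_nonneg_left hjensen hT'.le
    _ = (T / lam) * ∑ xs : Fin T → X, (∏ i, P (xs i)) * (lam * (ψ z ⬝ᵥ ((M xs)⁻¹ *ᵥ ψ z))) := by
        rw [mul_sum, mul_sum]
        refine sum_congr rfl fun xs _ => ?_
        field_simp
end

section
/- Fix T ∈ ℕ₊, η > 0, and a finite set X. For each t ∈ [T], let u_t: X → ℝ satisfy η u_t(x) ≤ 1 for all x ∈ X. Define P̃₁(x) = 1/|X| and P̃_{t+1}(x) = exp(η Σ_{i=1}^t u_i(x)) / Σ_{x'} exp(η Σ_{i=1}^t u_i(x')). Then for any z ∈ X: Σ_{t=1}^T u_t(z) − Σ_{t=1}^T Σ_x P̃_t(x) u_t(x) ≤ (log |X|)/η + η Σ_{t=1}^T Σ_x P̃_t(x) u_t²(x). -/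
open Matrix Finset

lemma exp_le_one_add_add_sq (a : ℝ) (ha : a ≤ 1) : Real.exp a ≤ 1 + a + a ^ 2 := by
  rcases le_or_gt a 0 with h | h
  · have h1 : 1 - a ≤ Real.exp (-a) := by linarith [Real.add_one_le_exp (-a)]
    have h2 : Real.exp (-a) * Real.exp a = 1 := by
      rw [← Real.exp_add]; simp
    nlinarith [Real.exp_pos a, mul_le_mul_of_nonneg_right h1 (Real.exp_pos a).le, sq_nonneg a]
  · have hb : |a| ≤ 1 := by rw [abs_of_pos h]; exact ha
    have h3 := Real.exp_bound hb (n := 2) (by norm_num)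
    simp [Finset.sum_range_succ, Nat.factorial] at h3
    have := abs_le.mp h3
    nlinarith [sq_nonneg a]

/-- Standard exponential-weights (Exp3) inequality: if `η u_t(x) ≤ 1` for all `t, x` and
`P̃_t` is the exponential-weights distribution, then for any `z`,
`Σ_t u_t(z) − Σ_t Σ_x P̃_t(x) u_t(x) ≤ (log|X|)/η + η Σ_t Σ_x P̃_t(x) u_t(x)²`. -/
theorem stmt_6 {X : Type*} [Fintype X] [Nonempty X] (T : ℕ) (η : ℝ) (hη : 0 < η)
    (u : Fin T → X → ℝ) (hu : ∀ t x, η * u t x ≤ 1)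
    (P : Fin T → X → ℝ)
    (hP : ∀ t x, P t x = Real.exp (η * ∑ i ∈ Finset.Iio t, u i x) /
        ∑ x', Real.exp (η * ∑ i ∈ Finset.Iio t, u i x'))
    (z : X) :
    ∑ t, u t z - ∑ t, ∑ x, P t x * u t x ≤
      Real.log (Fintype.card X) / η + η * ∑ t, ∑ x, P t x * (u t x) ^ 2 := by
  classical
  set u' : ℕ → X → ℝ := fun i x => if h : i < T then u ⟨i, h⟩ x else 0 with hu'
  set W : ℕ → ℝ := fun n => ∑ x, Real.exp (η * ∑ i ∈ Finset.range n, u' i x) with hW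
  have hWpos : ∀ n, 0 < W n := fun n =>
    Finset.sum_pos (fun x _ => Real.exp_pos _) Finset.univ_nonempty
  have hIio : ∀ (t : Fin T) (x : X),
      ∑ i ∈ Finset.Iio t, u i x = ∑ i ∈ Finset.range t.val, u' i x := by
    intro t x
    rw [← Nat.Iio_eq_range, ← Fin.map_valEmbedding_Iio, Finset.sum_map]
    refine Finset.sum_congr rfl fun i _ => ?_
    simp [hu', i.isLt]
  set A : Fin T → ℝ := fun t => ∑ x, P t x * u t x with hA
  set B : Fin T → ℝ := fun t => ∑ x, P t x * (u t x) ^ 2 with hB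
  -- P rewritten
  have hPt : ∀ (t : Fin T) (x : X),
      P t x = Real.exp (η * ∑ i ∈ Finset.range t.val, u' i x) / W t.val := by
    intro t x
    rw [hP, hW]
    simp only [hIio]
  have hPnn : ∀ (t : Fin T) (x : X), 0 ≤ P t x := by
    intro t x
    rw [hPt]
    exact div_nonneg (Real.exp_pos _).le (hWpos _).le
  have hPsum : ∀ t : Fin T, ∑ x, P t x = 1 := by
    intro t
    simp only [hPt]
    rw [← Finset.sum_div]
    exact div_self (hWpos (t : ℕ)).ne'
  -- step inequality
  have hstep : ∀ t : Fin T, W (t.val + 1) ≤ W t.val * Real.exp (η * A t + η ^ 2 * B t) := by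
    intro t
    have h1 : W (t.val + 1) = W t.val * ∑ x, P t x * Real.exp (η * u t x) := by
      rw [hW, Finset.mul_sum]
      refine Finset.sum_congr rfl fun x _ => ?_
      rw [hPt t x, Finset.sum_range_succ, mul_add, Real.exp_add]
      have hx : u' t.val x = u t x := by simp [hu', t.isLt]
      rw [hx]
      field_simp [(hWpos t.val).ne']
      try ring
    have h2 : ∑ x, P t x * Real.exp (η * u t x) ≤ 1 + (η * A t + η ^ 2 * B t) := by
      calc ∑ x, P t x * Real.exp (η * u t x)
          ≤ ∑ x, P t x * (1 + η * u t x + (η * u t x) ^ 2) := by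
            refine Finset.sum_le_sum fun x _ => ?_
            exact mul_le_mul_of_nonneg_left (exp_le_one_add_add_sq _ (hu t x)) (hPnn t x)
        _ = 1 + (η * A t + η ^ 2 * B t) := by
            simp only [mul_add, Finset.sum_add_distrib]
            have e1 : ∑ x, P t x * 1 = 1 := by
              simp only [mul_one]
              exact hPsum t
            have e2 : ∑ x, P t x * (η * u t x) = η * A t := by
              simp only [hA, Finset.mul_sum]
              exact Finset.sum_congr rfl fun x _ => by ring
            have e3 : ∑ x, P t x * (η * u t x) ^ 2 = η ^ 2 * B t := by
              simp only [hB, Finset.mul_sum]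
              exact Finset.sum_congr rfl fun x _ => by ring
            rw [e1, e2, e3]; ring
    have h3 : 1 + (η * A t + η ^ 2 * B t) ≤ Real.exp (η * A t + η ^ 2 * B t) := by
      linarith [Real.add_one_le_exp (η * A t + η ^ 2 * B t)]
    calc W (t.val + 1) = W t.val * ∑ x, P t x * Real.exp (η * u t x) := h1
      _ ≤ W t.val * (1 + (η * A t + η ^ 2 * B t)) :=
          mul_le_mul_of_nonneg_left h2 (hWpos _).le
      _ ≤ W t.val * Real.exp (η * A t + η ^ 2 * B t) :=
          mul_le_mul_of_nonneg_left h3 (hWpos _).le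
  -- telescoping
  set c : ℕ → ℝ := fun i => if h : i < T then η * A ⟨i, h⟩ + η ^ 2 * B ⟨i, h⟩ else 0 with hc
  have key : ∀ n, n ≤ T → Real.log (W n) ≤ Real.log (W 0) + ∑ i ∈ Finset.range n, c i := by
    intro n
    induction n with
    | zero => simp
    | succ n ih =>
      intro hn
      have hnT : n < T := hn
      have h1 := hstep ⟨n, hnT⟩
      have h2 : Real.log (W (n + 1)) ≤ Real.log (W n) + (η * A ⟨n, hnT⟩ + η ^ 2 * B ⟨n, hnT⟩) := by
        calc Real.log (W (n + 1)) ≤ Real.log (W n * Real.exp (η * A ⟨n, hnT⟩ + η ^ 2 * B ⟨n, hnT⟩)) :=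
              Real.log_le_log (hWpos _) h1
          _ = Real.log (W n) + (η * A ⟨n, hnT⟩ + η ^ 2 * B ⟨n, hnT⟩) := by
              rw [Real.log_mul (hWpos _).ne' (Real.exp_pos _).ne', Real.log_exp]
      rw [Finset.sum_range_succ]
      have hcn : c n = η * A ⟨n, hnT⟩ + η ^ 2 * B ⟨n, hnT⟩ := by rw [hc]; simp [hnT]
      have := ih (Nat.le_of_succ_le hn)
      linarith
  have hkeyT := key T le_rfl
  -- sum of c over range T
  have hcsum : ∑ i ∈ Finset.range T, c i = η * ∑ t, A t + η ^ 2 * ∑ t, B t := by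
    rw [← Fin.sum_univ_eq_sum_range c T, Finset.mul_sum, Finset.mul_sum, ← Finset.sum_add_distrib]
    refine Finset.sum_congr rfl fun t _ => ?_
    rw [hc]
    simp [t.isLt]
  -- lower bound on log (W T)
  have hlow : η * ∑ t, u t z ≤ Real.log (W T) := by
    have h1 : Real.exp (η * ∑ t, u t z) ≤ W T := by
      have : (η * ∑ t, u t z) = η * ∑ i ∈ Finset.range T, u' i z := by
        congr 1
        rw [← Fin.sum_univ_eq_sum_range (fun i => u' i z) T]
        refine Finset.sum_congr rfl fun t _ => ?_
        simp [hu', t.isLt]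
      rw [this]
      show _ ≤ ∑ x, Real.exp (η * ∑ i ∈ Finset.range T, u' i x)
      exact Finset.single_le_sum (f := fun x => Real.exp (η * ∑ i ∈ Finset.range T, u' i x))
        (fun x _ => (Real.exp_pos _).le) (Finset.mem_univ z)
    calc η * ∑ t, u t z = Real.log (Real.exp (η * ∑ t, u t z)) := (Real.log_exp _).symm
      _ ≤ Real.log (W T) := Real.log_le_log (Real.exp_pos _) h1
  have hW0 : Real.log (W 0) = Real.log (Fintype.card X) := by
    rw [hW]
    simp [Finset.card_univ]
  have hmain : η * ∑ t, u t z ≤ Real.log (Fintype.card X) + (η * ∑ t, A t + η ^ 2 * ∑ t, B t) := by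
    rw [← hW0, ← hcsum]
    linarith
  have hAsum : (∑ t, ∑ x, P t x * u t x) = ∑ t, A t := by simp only [hA]
  have hBsum : (∑ t, ∑ x, P t x * (u t x) ^ 2) = ∑ t, B t := by simp only [hB]
  rw [hAsum, hBsum]
  have h4 : ∑ t, u t z - ∑ t, A t ≤ (Real.log (Fintype.card X) + η ^ 2 * ∑ t, B t) / η := by
    rw [le_div_iff₀ hη]
    nlinarith [hmain]
  have h5 : (Real.log (Fintype.card X) + η ^ 2 * ∑ t, B t) / η
      = Real.log (Fintype.card X) / η + η * ∑ t, B t := by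
    field_simp
  linarith
end

section
/- Let Ψ̄ ∈ ℝ^{N×N} and S ∈ ℝ^{N×s} be matrices, λ, T > 0, and let Q = Ψ̄S [(Ψ̄S)ᵀ(Ψ̄S)]† (Ψ̄S)ᵀ be the orthogonal projection onto the column span of Ψ̄S. Suppose (1/2)(Ψ̄Ψ̄ᵀ + (λ/T)I_N) ⪯ Ψ̄SSᵀΨ̄ᵀ + (λ/T)I_N ⪯ (3/2)(Ψ̄Ψ̄ᵀ + (λ/T)I_N). Then Ψ̄Ψ̄ᵀ + (λ/T)I_N ⪯ 3 (QΨ̄(QΨ̄)ᵀ + (λ/T)I_N). -/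
/-!
Write `A = Ψ̄Ψ̄ᵀ`, `K = Ψ̄SSᵀΨ̄ᵀ = (Ψ̄S)(Ψ̄S)ᵀ` and `c = λ/T`. Because `Q` fixes `Ψ̄S`, it leaves `K`
unchanged under compression: `QKQ = K`. Hence
`3(QAQ + cI) - (A + cI) = 2 Q((3/2)(A + cI) - (K + cI))Q + 2((K + cI) - (1/2)(A + cI)) + c(I - Q)`,
a sum of a congruence of the upper bound, the lower bound, and a nonnegative multiple of the
complementary projection `I - Q`, all positive semidefinite.
-/

namespace Matrix

variable {m n : Type*} [Fintype m] [Fintype n]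

theorem mul_eq_self_of_transpose_mul_self_mul_eq [DecidableEq n] {P : Matrix m n ℝ}
    {X : Matrix n n ℝ} (h : Pᵀ * P * X = Pᵀ * P) : P * X = P := by
  have h0 : Pᴴ * P * (X - 1) = 0 := by
    rw [conjTranspose_eq_transpose_of_trivial, Matrix.mul_sub, h, Matrix.mul_one, sub_self]
  rwa [conjTranspose_mul_self_mul_eq_zero, Matrix.mul_sub, Matrix.mul_one, sub_eq_zero] at h0

theorem mul_mul_transpose_mul_eq_self [DecidableEq n] {P : Matrix m n ℝ} {B : Matrix n n ℝ}
    (hB : Pᵀ * P * B * (Pᵀ * P) = Pᵀ * P) : P * B * Pᵀ * P = P := by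
  rw [Matrix.mul_assoc, Matrix.mul_assoc]
  exact mul_eq_self_of_transpose_mul_self_mul_eq (by rw [← Matrix.mul_assoc, hB])

theorem isSymm_mul_mul_transpose_of_mul_eq_self {P : Matrix m n ℝ} {B : Matrix n n ℝ}
    (hQP : P * B * Pᵀ * P = P) : (P * B * Pᵀ).IsSymm := by
  have hQQt : P * B * Pᵀ * (P * B * Pᵀ)ᵀ = (P * B * Pᵀ)ᵀ := by
    simp only [transpose_mul, transpose_transpose, ← Matrix.mul_assoc, hQP]
  have h := congrArg transpose hQQt
  rw [transpose_mul, transpose_transpose, hQQt] at h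
  exact h

theorem isIdempotentElem_mul_mul_transpose_of_mul_eq_self {P : Matrix m n ℝ}
    {B : Matrix n n ℝ} (hQP : P * B * Pᵀ * P = P) : IsIdempotentElem (P * B * Pᵀ) := by
  rw [IsIdempotentElem, ← Matrix.mul_assoc, ← Matrix.mul_assoc, hQP]

theorem posSemidef_one_sub_of_isSymm_of_isIdempotentElem [DecidableEq m] {Q : Matrix m m ℝ}
    (hsymm : Q.IsSymm) (hidem : IsIdempotentElem Q) : (1 - Q).PosSemidef := by
  have h : 1 - Q = (1 - Q) * (1 - Q)ᴴ := by
    rw [conjTranspose_eq_transpose_of_trivial, transpose_sub, transpose_one, hsymm.eq,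
      hidem.one_sub.eq]
  rw [h]
  exact posSemidef_self_mul_conjTranspose _

theorem posSemidef_three_smul_compression_sub_of_approx [DecidableEq m] {A K Q : Matrix m m ℝ}
    {c : ℝ} (hc : 0 ≤ c) (hsymm : Q.IsSymm) (hidem : IsIdempotentElem Q) (hK : Q * K * Q = K)
    (hlow : ((K + c • 1) - (1 / 2 : ℝ) • (A + c • 1)).PosSemidef)
    (hup : ((3 / 2 : ℝ) • (A + c • 1) - (K + c • 1)).PosSemidef) :
    ((3 : ℝ) • (Q * A * Q + c • 1) - (A + c • 1)).PosSemidef := by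
  have hupQ := hup.mul_mul_conjTranspose_same Q
  rw [conjTranspose_eq_transpose_of_trivial, hsymm.eq] at hupQ
  have hdecomp : (3 : ℝ) • (Q * A * Q + c • 1) - (A + c • 1) =
      (2 : ℝ) • (Q * ((3 / 2 : ℝ) • (A + c • 1) - (K + c • 1)) * Q) +
      ((2 : ℝ) • ((K + c • 1) - (1 / 2 : ℝ) • (A + c • 1)) + c • (1 - Q)) := by
    simp only [Matrix.mul_sub, Matrix.sub_mul, Matrix.mul_add, Matrix.add_mul, Matrix.mul_smul,
      Matrix.smul_mul, Matrix.mul_one, hidem.eq, hK]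
    module
  rw [hdecomp]
  exact (hupQ.smul zero_le_two).add ((hlow.smul zero_le_two).add
    ((posSemidef_one_sub_of_isSymm_of_isIdempotentElem hsymm hidem).smul hc))

end Matrix

open Matrix

theorem stmt_9_general {N s : ℕ} (Ψ : Matrix (Fin N) (Fin N) ℝ) (S : Matrix (Fin N) (Fin s) ℝ)
    (lam T : ℝ) (hlam : 0 < lam) (hT : 0 < T)
    (B : Matrix (Fin s) (Fin s) ℝ)
    (hB1 : (Ψ * S)ᵀ * (Ψ * S) * B * ((Ψ * S)ᵀ * (Ψ * S)) = (Ψ * S)ᵀ * (Ψ * S))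
    (Q : Matrix (Fin N) (Fin N) ℝ) (hQ : Q = Ψ * S * B * (Ψ * S)ᵀ)
    (hlow : ((Ψ * S * Sᵀ * Ψᵀ + (lam / T) • 1) -
      (1 / 2 : ℝ) • (Ψ * Ψᵀ + (lam / T) • 1)).PosSemidef)
    (hup : ((3 / 2 : ℝ) • (Ψ * Ψᵀ + (lam / T) • 1) -
      (Ψ * S * Sᵀ * Ψᵀ + (lam / T) • 1)).PosSemidef) :
    ((3 : ℝ) • ((Q * Ψ) * (Q * Ψ)ᵀ + (lam / T) • 1) -
      (Ψ * Ψᵀ + (lam / T) • 1)).PosSemidef := by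
  have hfix : Ψ * S * B * (Ψ * S)ᵀ * (Ψ * S) = Ψ * S := mul_mul_transpose_mul_eq_self hB1
  have hQP : Q * (Ψ * S) = Ψ * S := hQ ▸ hfix
  have hsymm : Q.IsSymm := hQ ▸ isSymm_mul_mul_transpose_of_mul_eq_self hfix
  have hidem : IsIdempotentElem Q := hQ ▸ isIdempotentElem_mul_mul_transpose_of_mul_eq_self hfix
  have hK : Q * (Ψ * S * Sᵀ * Ψᵀ) * Q = Ψ * S * Sᵀ * Ψᵀ := by
    have hPQ : (Ψ * S)ᵀ * Q = (Ψ * S)ᵀ := by rw [← hsymm.eq, ← transpose_mul, hQP]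
    have hPPt : Ψ * S * Sᵀ * Ψᵀ = Ψ * S * (Ψ * S)ᵀ := by rw [transpose_mul, ← Matrix.mul_assoc]
    rw [hPPt, ← Matrix.mul_assoc, hQP, Matrix.mul_assoc, hPQ]
  have hcompress : (Q * Ψ) * (Q * Ψ)ᵀ = Q * (Ψ * Ψᵀ) * Q := by
    rw [transpose_mul, hsymm.eq, Matrix.mul_assoc, Matrix.mul_assoc, Matrix.mul_assoc]
  rw [hcompress]
  exact posSemidef_three_smul_compression_sub_of_approx (div_pos hlam hT).le hsymm hidem hK
    hlow hup

/-- If the Nyström sampling matrix `S` satisfies the two-sided spectral approximation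
`(1/2)(Ψ̄Ψ̄ᵀ + (λ/T)I) ⪯ Ψ̄SSᵀΨ̄ᵀ + (λ/T)I ⪯ (3/2)(Ψ̄Ψ̄ᵀ + (λ/T)I)`, then with
`Q = Ψ̄S[(Ψ̄S)ᵀ(Ψ̄S)]†(Ψ̄S)ᵀ` (the orthogonal projection onto the column span of `Ψ̄S`,
where `B` is the Moore–Penrose pseudoinverse of `(Ψ̄S)ᵀ(Ψ̄S)` characterized by the four
Penrose conditions), one has `Ψ̄Ψ̄ᵀ + (λ/T)I ⪯ 3(QΨ̄(QΨ̄)ᵀ + (λ/T)I)`. -/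
theorem stmt_9 {N s : ℕ} (Ψ : Matrix (Fin N) (Fin N) ℝ) (S : Matrix (Fin N) (Fin s) ℝ)
    (lam T : ℝ) (hlam : 0 < lam) (hT : 0 < T)
    (B : Matrix (Fin s) (Fin s) ℝ)
    (hB1 : (Ψ * S)ᵀ * (Ψ * S) * B * ((Ψ * S)ᵀ * (Ψ * S)) = (Ψ * S)ᵀ * (Ψ * S))
    (hB2 : B * ((Ψ * S)ᵀ * (Ψ * S)) * B = B)
    (hB3 : ((Ψ * S)ᵀ * (Ψ * S) * B)ᵀ = (Ψ * S)ᵀ * (Ψ * S) * B)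
    (hB4 : (B * ((Ψ * S)ᵀ * (Ψ * S)))ᵀ = B * ((Ψ * S)ᵀ * (Ψ * S)))
    (Q : Matrix (Fin N) (Fin N) ℝ) (hQ : Q = Ψ * S * B * (Ψ * S)ᵀ)
    (hlow : ((Ψ * S * Sᵀ * Ψᵀ + (lam / T) • 1) -
      (1 / 2 : ℝ) • (Ψ * Ψᵀ + (lam / T) • 1)).PosSemidef)
    (hup : ((3 / 2 : ℝ) • (Ψ * Ψᵀ + (lam / T) • 1) -
      (Ψ * S * Sᵀ * Ψᵀ + (lam / T) • 1)).PosSemidef) :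
    ((3 : ℝ) • ((Q * Ψ) * (Q * Ψ)ᵀ + (lam / T) • 1) -
      (Ψ * Ψᵀ + (lam / T) • 1)).PosSemidef :=
  stmt_9_general Ψ S lam T hlam hT B hB1 Q hQ hlow hup
end

section
/- Let Ψ̄ ∈ ℝ^{N×N}, S ∈ ℝ^{N×s}, λ, T > 0, and Q = Ψ̄S [(Ψ̄S)ᵀ(Ψ̄S)]† (Ψ̄S)ᵀ the orthogonal projection onto the column span of Ψ̄S. If (1/2)(Ψ̄Ψ̄ᵀ + (λ/T)I_N) ⪯ Ψ̄SSᵀΨ̄ᵀ + (λ/T)I_N, then I_N − Q ⪯ (2λ/T)(Ψ̄Ψ̄ᵀ + (λ/T)I_N)⁻¹. -/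
/-!
Write `c = λ/T`, `C = Ψ̄S`, `M = CCᵀ` and `A = Ψ̄Ψ̄ᵀ + cI`. Since `CᵀC` and `C` have the same kernel,
the Penrose identity `CᵀC B CᵀC = CᵀC` already gives `C B CᵀC = C`; hence `Q = C B Cᵀ` is a
self-adjoint idempotent with `QM = M`. Then `P = I - Q` annihilates `M`, so `c(M + cI)⁻¹` is the
identity on the range of `P`, and `c(M + cI)⁻¹ - P = Q · c(M + cI)⁻¹ · Q ⪰ 0`. Antitonicity of the
inverse turns the hypothesis `A/2 ⪯ M + cI` into `(M + cI)⁻¹ ⪯ 2A⁻¹`.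
-/

open Matrix
open scoped MatrixOrder ComplexOrder

theorem one_sub_mul_mul_one_sub_eq_sub {R : Type*} [Ring R] {p k : R} (hp : IsIdempotentElem p)
    (hpk : p * k = p) (hkp : k * p = p) : (1 - p) * k * (1 - p) = k - p := by
  calc (1 - p) * k * (1 - p) = k - p * k - k * p + p * k * p := by noncomm_ring
    _ = k - p := by rw [hpk, hkp, hp.eq]; abel

namespace Matrix

variable {𝕜 m n k : Type*} [RCLike 𝕜] [Fintype m] [Fintype n]

theorem mul_eq_mul_of_conjTranspose_mul_self_mul_eq (C : Matrix m n 𝕜) {X Y : Matrix n k 𝕜}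
    (h : Cᴴ * C * X = Cᴴ * C * Y) : C * X = C * Y := by
  rw [← sub_eq_zero, ← Matrix.mul_sub, ← conjTranspose_mul_self_eq_zero, conjTranspose_mul,
    Matrix.mul_assoc, ← Matrix.mul_assoc Cᴴ, Matrix.mul_sub, h, sub_self, Matrix.mul_zero]

variable [DecidableEq n]

theorem inv_le_inv_of_le {A B : Matrix n n 𝕜} (hA : A.PosDef) (hAB : A ≤ B) : B⁻¹ ≤ A⁻¹ := by
  have hB : B.PosDef := by simpa using hA.add_posSemidef (le_iff.mp hAB)
  have hAd : IsUnit A.det := (isUnit_iff_isUnit_det A).mp hA.isUnit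
  have hBd : IsUnit B.det := (isUnit_iff_isUnit_det B).mp hB.isUnit
  have hAi : IsSelfAdjoint A⁻¹ := hA.inv.isHermitian
  have hBi : IsSelfAdjoint B⁻¹ := hB.inv.isHermitian
  have hsquare : 0 ≤ (B⁻¹ - A⁻¹) * A * (B⁻¹ - A⁻¹) :=
    (hBi.sub hAi).conjugate_nonneg (nonneg_iff_posSemidef.mpr hA.posSemidef)
  have hconj : B⁻¹ * A * B⁻¹ ≤ B⁻¹ := by
    simpa [nonsing_inv_mul _ hBd] using hBi.conjugate_le_conjugate hAB
  have hsum : (B⁻¹ - A⁻¹) * A * (B⁻¹ - A⁻¹) + (B⁻¹ - B⁻¹ * A * B⁻¹) = A⁻¹ - B⁻¹ := by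
    rw [Matrix.sub_mul, Matrix.sub_mul, Matrix.mul_sub, Matrix.mul_sub, nonsing_inv_mul _ hAd,
      one_mul, Matrix.mul_assoc B⁻¹ A A⁻¹, mul_nonsing_inv _ hAd, mul_one, one_mul]
    abel
  -- `B⁻¹ ⪯ A⁻¹` without square roots: `A⁻¹ - B⁻¹ = (B⁻¹ - A⁻¹)A(B⁻¹ - A⁻¹) + B⁻¹(B - A)B⁻¹`.
  rw [← sub_nonneg, ← hsum]
  exact add_nonneg hsquare (sub_nonneg.mpr hconj)

theorem mul_mul_conjTranspose_mul_eq_self {C : Matrix m n 𝕜} {B : Matrix n n 𝕜}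
    (hB : Cᴴ * C * B * (Cᴴ * C) = Cᴴ * C) : C * B * Cᴴ * C = C := by
  simpa [Matrix.mul_assoc] using
    mul_eq_mul_of_conjTranspose_mul_self_mul_eq C (X := B * (Cᴴ * C)) (Y := 1)
      (by rw [Matrix.mul_one, ← Matrix.mul_assoc, hB])

theorem isStarProjection_mul_mul_conjTranspose {C : Matrix m n 𝕜} {B : Matrix n n 𝕜}
    (hB : Cᴴ * C * B * (Cᴴ * C) = Cᴴ * C) : IsStarProjection (C * B * Cᴴ) := by
  have hQC := mul_mul_conjTranspose_mul_eq_self hB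
  have hmul_conjTranspose : C * B * Cᴴ * (C * B * Cᴴ)ᴴ = (C * B * Cᴴ)ᴴ := by
    rw [conjTranspose_mul, conjTranspose_conjTranspose, ← Matrix.mul_assoc, hQC]
  refine ⟨?_, ?_⟩
  · change C * B * Cᴴ * (C * B * Cᴴ) = C * B * Cᴴ
    rw [← Matrix.mul_assoc, ← Matrix.mul_assoc, hQC]
  · calc star (C * B * Cᴴ) = C * B * Cᴴ * (C * B * Cᴴ)ᴴ := hmul_conjTranspose.symm
      _ = (C * B * Cᴴ * (C * B * Cᴴ)ᴴ)ᴴ := by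
        rw [conjTranspose_mul (C * B * Cᴴ), conjTranspose_conjTranspose]
      _ = C * B * Cᴴ := by rw [hmul_conjTranspose, conjTranspose_conjTranspose]

theorem one_sub_le_smul_inv_add_smul_one {Q M : Matrix n n 𝕜} (hQ : IsStarProjection Q)
    (hM : M.PosSemidef) (hQM : Q * M = M) {c : ℝ} (hc : 0 < c) :
    1 - Q ≤ c • (M + c • 1)⁻¹ := by
  have hQh : Qᴴ = Q := hQ.isSelfAdjoint
  have hMQ : M * Q = M := by
    simpa [hM.isHermitian.eq, hQh] using congrArg conjTranspose hQM
  have hD : (M + c • 1).PosDef := PosDef.posSemidef_add hM (PosDef.one.smul hc)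
  have hDd : IsUnit (M + c • 1).det := (isUnit_iff_isUnit_det _).mp hD.isUnit
  have hPD : (1 - Q) * (M + c • 1) = c • (1 - Q) := by
    rw [Matrix.mul_add, Matrix.sub_mul, Matrix.one_mul, hQM, sub_self, zero_add, Matrix.mul_smul,
      Matrix.mul_one]
  have hDP : (M + c • 1) * (1 - Q) = c • (1 - Q) := by
    rw [Matrix.add_mul, Matrix.mul_sub, Matrix.mul_one, hMQ, sub_self, zero_add, Matrix.smul_mul,
      Matrix.one_mul]
  have hPK : (1 - Q) * (c • (M + c • 1)⁻¹) = 1 - Q := by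
    rw [Matrix.mul_smul, ← Matrix.smul_mul, ← hPD, Matrix.mul_assoc, mul_nonsing_inv _ hDd,
      Matrix.mul_one]
  have hKP : c • (M + c • 1)⁻¹ * (1 - Q) = 1 - Q := by
    rw [Matrix.smul_mul, ← Matrix.mul_smul, ← hDP, ← Matrix.mul_assoc, nonsing_inv_mul _ hDd,
      Matrix.one_mul]
  have hK : 0 ≤ c • (M + c • 1)⁻¹ := nonneg_iff_posSemidef.mpr (hD.inv.posSemidef.smul hc.le)
  rw [← sub_nonneg, ← one_sub_mul_mul_one_sub_eq_sub hQ.one_sub.isIdempotentElem hPK hKP,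
    sub_sub_cancel]
  exact hQ.isSelfAdjoint.conjugate_nonneg hK

end Matrix

theorem stmt_10_general {N s : ℕ} (Ψ : Matrix (Fin N) (Fin N) ℝ) (S : Matrix (Fin N) (Fin s) ℝ)
    (lam T : ℝ) (hlam : 0 < lam) (hT : 0 < T)
    (B : Matrix (Fin s) (Fin s) ℝ)
    (hB1 : (Ψ * S)ᵀ * (Ψ * S) * B * ((Ψ * S)ᵀ * (Ψ * S)) = (Ψ * S)ᵀ * (Ψ * S))
    (Q : Matrix (Fin N) (Fin N) ℝ) (hQ : Q = Ψ * S * B * (Ψ * S)ᵀ)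
    (hlow : ((Ψ * S * Sᵀ * Ψᵀ + (lam / T) • 1) -
      (1 / 2 : ℝ) • (Ψ * Ψᵀ + (lam / T) • 1)).PosSemidef) :
    ((2 * lam / T) • (Ψ * Ψᵀ + (lam / T) • 1)⁻¹ -
      ((1 : Matrix (Fin N) (Fin N) ℝ) - Q)).PosSemidef := by
  simp only [← conjTranspose_eq_transpose_of_trivial] at hB1 hQ hlow ⊢
  have hc : 0 < lam / T := div_pos hlam hT
  set c := lam / T
  set A := Ψ * Ψᴴ + c • 1
  have hM : Ψ * S * Sᴴ * Ψᴴ = Ψ * S * (Ψ * S)ᴴ := by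
    simp only [conjTranspose_mul, Matrix.mul_assoc]
  have hQM : Q * (Ψ * S * (Ψ * S)ᴴ) = Ψ * S * (Ψ * S)ᴴ := by
    rw [hQ, ← Matrix.mul_assoc, mul_mul_conjTranspose_mul_eq_self hB1]
  have hproj : 1 - Q ≤ c • (Ψ * S * Sᴴ * Ψᴴ + c • 1)⁻¹ := by
    rw [hM]
    exact one_sub_le_smul_inv_add_smul_one (hQ ▸ isStarProjection_mul_mul_conjTranspose hB1)
      (posSemidef_self_mul_conjTranspose _) hQM hc
  have hA : A.PosDef :=
    PosDef.posSemidef_add (posSemidef_self_mul_conjTranspose Ψ) (PosDef.one.smul hc)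
  have hhalf : ((1 / 2 : ℝ) • A)⁻¹ = (2 : ℝ) • A⁻¹ := inv_eq_left_inv (by
    rw [smul_mul_smul_comm, nonsing_inv_mul _ ((isUnit_iff_isUnit_det A).mp hA.isUnit)]
    norm_num)
  have hinv := inv_le_inv_of_le (hA.smul (by norm_num : (0 : ℝ) < 1 / 2)) hlow
  rw [hhalf] at hinv
  rw [← le_iff]
  calc 1 - Q ≤ c • (Ψ * S * Sᴴ * Ψᴴ + c • 1)⁻¹ := hproj
    _ ≤ c • (2 : ℝ) • A⁻¹ := smul_le_smul_of_nonneg_left hinv hc.le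
    _ = (2 * lam / T) • A⁻¹ := by rw [smul_smul, mul_comm, mul_div_assoc]

/-- If `(1/2)(Ψ̄Ψ̄ᵀ + (λ/T)I) ⪯ Ψ̄SSᵀΨ̄ᵀ + (λ/T)I`, then with
`Q = Ψ̄S[(Ψ̄S)ᵀ(Ψ̄S)]†(Ψ̄S)ᵀ` (orthogonal projection onto the column span of `Ψ̄S`,
`B` being the Moore–Penrose pseudoinverse of `(Ψ̄S)ᵀ(Ψ̄S)`),
`I − Q ⪯ (2λ/T)(Ψ̄Ψ̄ᵀ + (λ/T)I)⁻¹`. -/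
theorem stmt_10 {N s : ℕ} (Ψ : Matrix (Fin N) (Fin N) ℝ) (S : Matrix (Fin N) (Fin s) ℝ)
    (lam T : ℝ) (hlam : 0 < lam) (hT : 0 < T)
    (B : Matrix (Fin s) (Fin s) ℝ)
    (hB1 : (Ψ * S)ᵀ * (Ψ * S) * B * ((Ψ * S)ᵀ * (Ψ * S)) = (Ψ * S)ᵀ * (Ψ * S))
    (hB2 : B * ((Ψ * S)ᵀ * (Ψ * S)) * B = B)
    (hB3 : ((Ψ * S)ᵀ * (Ψ * S) * B)ᵀ = (Ψ * S)ᵀ * (Ψ * S) * B)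
    (hB4 : (B * ((Ψ * S)ᵀ * (Ψ * S)))ᵀ = B * ((Ψ * S)ᵀ * (Ψ * S)))
    (Q : Matrix (Fin N) (Fin N) ℝ) (hQ : Q = Ψ * S * B * (Ψ * S)ᵀ)
    (hlow : ((Ψ * S * Sᵀ * Ψᵀ + (lam / T) • 1) -
      (1 / 2 : ℝ) • (Ψ * Ψᵀ + (lam / T) • 1)).PosSemidef) :
    ((2 * lam / T) • (Ψ * Ψᵀ + (lam / T) • 1)⁻¹ -
      ((1 : Matrix (Fin N) (Fin N) ℝ) - Q)).PosSemidef :=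
  stmt_10_general Ψ S lam T hlam hT B hB1 Q hQ hlow
end

section
/- Let σ²(·; X_m, λ) denote the GP posterior variance with inputs X_m = (x₁,…,x_m) and regularization λ > 0 on a finite (or compact) domain X. Let (x_t^{MVR}) be the maximum variance reduction sequence, i.e., x_t^{MVR} ∈ argmax_x σ²(x; X_{t−1}^{MVR}, λ). If Σ_{t=1}^M σ²(x_t^{MVR}; X_{t−1}^{MVR}, λ) ≤ 2γ_M / log(1 + λ⁻¹) holds (the information-gain bound), then sup_{x∈X} σ²(x; X_M^{MVR}, λ) ≤ 2γ_M / (M log(1 + λ⁻¹)), and if λ ≥ 1 this is at most 4λγ_M/M. -/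
open Matrix

lemma psd_quad {m : ℕ} {A : Matrix (Fin m) (Fin m) ℝ} (hA : A.PosSemidef) (w : Fin m → ℝ) :
    0 ≤ w ⬝ᵥ (A *ᵥ w) := by
  simpa using hA.dotProduct_mulVec_nonneg w

lemma sym_dot {m : ℕ} {A : Matrix (Fin m) (Fin m) ℝ} (hA : A.IsHermitian) (x y : Fin m → ℝ) :
    x ⬝ᵥ (A *ᵥ y) = (A *ᵥ x) ⬝ᵥ y := by
  have hAT : Aᵀ = A := by
    have := hA.eq
    rwa [Matrix.conjTranspose_eq_transpose_of_trivial] at this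
  rw [dotProduct_mulVec]
  nth_rewrite 1 [← hAT]
  rw [vecMul_transpose]

lemma quad_le_inv {m : ℕ} {A : Matrix (Fin m) (Fin m) ℝ} (hA : A.PosDef) (v z : Fin m → ℝ) :
    2 * (v ⬝ᵥ z) - z ⬝ᵥ (A *ᵥ z) ≤ v ⬝ᵥ (A⁻¹ *ᵥ v) := by
  have hinv : A * A⁻¹ = 1 := Matrix.mul_nonsing_inv _ hA.det_pos.ne'.isUnit
  have hAv : A *ᵥ (A⁻¹ *ᵥ v) = v := by
    rw [Matrix.mulVec_mulVec, hinv, Matrix.one_mulVec]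
  have h0 : 0 ≤ (z - A⁻¹ *ᵥ v) ⬝ᵥ (A *ᵥ (z - A⁻¹ *ᵥ v)) := psd_quad hA.posSemidef _
  have h1 : (A⁻¹ *ᵥ v) ⬝ᵥ (A *ᵥ z) = v ⬝ᵥ z := by
    rw [sym_dot hA.isHermitian, hAv]
  have h2 : z ⬝ᵥ v = v ⬝ᵥ z := dotProduct_comm _ _
  have h3 : (A⁻¹ *ᵥ v) ⬝ᵥ v = v ⬝ᵥ (A⁻¹ *ᵥ v) := dotProduct_comm _ _
  rw [Matrix.mulVec_sub, hAv, dotProduct_sub, sub_dotProduct, sub_dotProduct, h1, h2, h3] at h0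
  linarith

lemma inv_eq_quad {m : ℕ} {A : Matrix (Fin m) (Fin m) ℝ} (hA : A.PosDef) (v : Fin m → ℝ) :
    v ⬝ᵥ (A⁻¹ *ᵥ v)
      = 2 * (v ⬝ᵥ (A⁻¹ *ᵥ v)) - (A⁻¹ *ᵥ v) ⬝ᵥ (A *ᵥ (A⁻¹ *ᵥ v)) := by
  have hinv : A * A⁻¹ = 1 := Matrix.mul_nonsing_inv _ hA.det_pos.ne'.isUnit
  have hAv : A *ᵥ (A⁻¹ *ᵥ v) = v := by
    rw [Matrix.mulVec_mulVec, hinv, Matrix.one_mulVec]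
  rw [hAv, dotProduct_comm]
  ring

lemma sum_ext {M t : ℕ} (ht : t ≤ M) (F : Fin M → ℝ)
    (hF : ∀ j : Fin M, ¬ (j : ℕ) < t → F j = 0) :
    ∑ j : Fin M, F j = ∑ i : Fin t, F (Fin.castLE ht i) := by
  have hmap : ∑ i : Fin t, F (Fin.castLE ht i)
      = ∑ j ∈ Finset.univ.map (Fin.castLEEmb ht), F j := by
    rw [Finset.sum_map]; rfl
  rw [hmap]
  symm
  apply Finset.sum_subset (Finset.subset_univ _)
  intro j _ hj
  apply hF
  intro hjt
  exact hj (Finset.mem_map.2 ⟨⟨(j : ℕ), hjt⟩, Finset.mem_univ _, by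
    simp [Fin.castLEEmb]⟩)

lemma dot_ext {M t : ℕ} (ht : t ≤ M) (u : Fin t → ℝ) (v : Fin M → ℝ) :
    v ⬝ᵥ (fun j : Fin M => if h : (j : ℕ) < t then u ⟨j, h⟩ else 0)
      = (fun i : Fin t => v (Fin.castLE ht i)) ⬝ᵥ u := by
  unfold dotProduct
  rw [sum_ext ht (fun j => v j * if h : (j : ℕ) < t then u ⟨j, h⟩ else 0)
    (fun j hj => by simp [dif_neg hj])]
  apply Finset.sum_congr rfl
  intro i _
  simp [Fin.isLt]

lemma lamI_posDef {m : ℕ} {lam : ℝ} (hlam : 0 < lam) :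
    (lam • (1 : Matrix (Fin m) (Fin m) ℝ)).PosDef := by
  rw [smul_one_eq_diagonal]
  exact Matrix.posDef_diagonal_iff.2 fun _ => hlam

lemma A_posDef {X : Type*} (k : X → X → ℝ)
    (hkpsd : ∀ (m : ℕ) (xs : Fin m → X),
      (Matrix.of fun i j : Fin m => k (xs i) (xs j)).PosSemidef)
    {lam : ℝ} (hlam : 0 < lam) (m : ℕ) (xs : Fin m → X) :
    ((Matrix.of fun i j : Fin m => k (xs i) (xs j)) +
      lam • (1 : Matrix (Fin m) (Fin m) ℝ)).PosDef :=
  Matrix.PosDef.posSemidef_add (hkpsd m xs) (lamI_posDef hlam)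

lemma k_symm {X : Type*} (k : X → X → ℝ)
    (hkpsd : ∀ (m : ℕ) (xs : Fin m → X),
      (Matrix.of fun i j : Fin m => k (xs i) (xs j)).PosSemidef)
    (a b : X) : k a b = k b a := by
  have h := (hkpsd 2 ![a, b]).1.eq
  have := congrFun (congrFun h 1) 0
  simpa using this

lemma postVar_mono {X : Type*} (k : X → X → ℝ)
    (hkpsd : ∀ (m : ℕ) (xs : Fin m → X),
      (Matrix.of fun i j : Fin m => k (xs i) (xs j)).PosSemidef)
    {lam : ℝ} (hlam : 0 < lam) {t M : ℕ} (ht : t ≤ M) (seq : ℕ → X) (x : X) :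
    (k x x - (fun i : Fin M => k x (seq i)) ⬝ᵥ
      (((Matrix.of fun i j : Fin M => k (seq i) (seq j)) +
        lam • (1 : Matrix (Fin M) (Fin M) ℝ))⁻¹ *ᵥ fun i => k x (seq i)))
    ≤ (k x x - (fun i : Fin t => k x (seq i)) ⬝ᵥ
      (((Matrix.of fun i j : Fin t => k (seq i) (seq j)) +
        lam • (1 : Matrix (Fin t) (Fin t) ℝ))⁻¹ *ᵥ fun i => k x (seq i))) := by
  set A := (Matrix.of fun i j : Fin M => k (seq i) (seq j)) +
    lam • (1 : Matrix (Fin M) (Fin M) ℝ) with hAdef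
  set B := (Matrix.of fun i j : Fin t => k (seq i) (seq j)) +
    lam • (1 : Matrix (Fin t) (Fin t) ℝ) with hBdef
  have hApd : A.PosDef := A_posDef k hkpsd hlam M _
  have hBpd : B.PosDef := A_posDef k hkpsd hlam t _
  set v : Fin M → ℝ := fun i => k x (seq i) with hv
  set w : Fin t → ℝ := fun i => k x (seq i) with hw
  have hsub : ∀ i j : Fin t, A (Fin.castLE ht i) (Fin.castLE ht j) = B i j := by
    intro i j
    simp only [hAdef, hBdef, Matrix.add_apply, Matrix.smul_apply, Matrix.of_apply,
      Matrix.one_apply, Fin.coe_castLE, Fin.castLE_inj]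
  suffices h : w ⬝ᵥ (B⁻¹ *ᵥ w) ≤ v ⬝ᵥ (A⁻¹ *ᵥ v) by linarith
  set u : Fin t → ℝ := B⁻¹ *ᵥ w with hu
  set z : Fin M → ℝ := fun j => if h : (j : ℕ) < t then u ⟨j, h⟩ else 0 with hz
  have hvz : v ⬝ᵥ z = w ⬝ᵥ u := by
    rw [hz, dot_ext ht]; rfl
  have hAz : ∀ i : Fin t, (A *ᵥ z) (Fin.castLE ht i) = (B *ᵥ u) i := by
    intro i
    show (A (Fin.castLE ht i)) ⬝ᵥ z = (B i) ⬝ᵥ u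
    rw [hz, dot_ext ht]
    congr 1
    funext j
    exact hsub i j
  have hzAz : z ⬝ᵥ (A *ᵥ z) = u ⬝ᵥ (B *ᵥ u) := by
    rw [dotProduct_comm z, hz, dot_ext ht]
    rw [dotProduct_comm u (B *ᵥ u)]
    congr 1
    funext i
    exact hAz i
  calc w ⬝ᵥ (B⁻¹ *ᵥ w) = 2 * (w ⬝ᵥ u) - u ⬝ᵥ (B *ᵥ u) := inv_eq_quad hBpd w
    _ = 2 * (v ⬝ᵥ z) - z ⬝ᵥ (A *ᵥ z) := by rw [hvz, hzAz]
    _ ≤ v ⬝ᵥ (A⁻¹ *ᵥ v) := quad_le_inv hApd v z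

lemma postVar_nonneg {X : Type*} (k : X → X → ℝ)
    (hkpsd : ∀ (m : ℕ) (xs : Fin m → X),
      (Matrix.of fun i j : Fin m => k (xs i) (xs j)).PosSemidef)
    {lam : ℝ} (hlam : 0 < lam) (m : ℕ) (xs : Fin m → X) (x : X) :
    0 ≤ k x x - (fun i : Fin m => k x (xs i)) ⬝ᵥ
      (((Matrix.of fun i j : Fin m => k (xs i) (xs j)) +
        lam • (1 : Matrix (Fin m) (Fin m) ℝ))⁻¹ *ᵥ fun i => k x (xs i)) := by
  set K := Matrix.of fun i j : Fin m => k (xs i) (xs j) with hK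
  set A := K + lam • (1 : Matrix (Fin m) (Fin m) ℝ) with hAdef
  have hApd : A.PosDef := A_posDef k hkpsd hlam m xs
  set v : Fin m → ℝ := fun i => k x (xs i) with hv
  set z : Fin m → ℝ := A⁻¹ *ᵥ v with hzdef
  have heq : v ⬝ᵥ (A⁻¹ *ᵥ v) = 2 * (v ⬝ᵥ z) - z ⬝ᵥ (A *ᵥ z) := inv_eq_quad hApd v
  have hsplit : z ⬝ᵥ (A *ᵥ z) = z ⬝ᵥ (K *ᵥ z) + lam * (z ⬝ᵥ z) := by
    rw [hAdef, Matrix.add_mulVec, dotProduct_add, Matrix.smul_mulVec,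
      Matrix.one_mulVec, dotProduct_smul, smul_eq_mul]
  have hz2 : 0 ≤ z ⬝ᵥ z := Finset.sum_nonneg fun i _ => mul_self_nonneg _
  -- PSD of extended kernel matrix on (xs, x) with vector (z, -1)
  have hext : 0 ≤ z ⬝ᵥ (K *ᵥ z) - 2 * (v ⬝ᵥ z) + k x x := by
    set xs' : Fin (m+1) → X := Fin.snoc xs x with hxs'
    set c : Fin (m+1) → ℝ := Fin.snoc z (-1) with hc
    have hpsd := psd_quad (hkpsd (m + 1) xs') c
    have hsnocx : ∀ i : Fin m, xs' (Fin.castSucc i) = xs i := fun i => by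
      simp [hxs']
    have hsnocl : xs' (Fin.last m) = x := by simp [hxs']
    have hcx : ∀ i : Fin m, c (Fin.castSucc i) = z i := fun i => by simp [hc]
    have hcl : c (Fin.last m) = -1 := by simp [hc]
    have hinner : ∀ y : X,
        (∑ j : Fin (m+1), k y (xs' j) * c j) = (∑ j : Fin m, k y (xs j) * z j) - k y x := by
      intro y
      rw [Fin.sum_univ_castSucc]
      simp only [hsnocx, hsnocl, hcx, hcl]
      ring
    have hexpand : c ⬝ᵥ
        ((Matrix.of fun i j : Fin (m+1) => k (xs' i) (xs' j)) *ᵥ c)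
        = z ⬝ᵥ (K *ᵥ z) - 2 * (v ⬝ᵥ z) + k x x := by
      simp only [dotProduct, Matrix.mulVec, Matrix.of_apply]
      rw [Fin.sum_univ_castSucc]
      simp only [hsnocx, hsnocl, hcx, hcl, hinner]
      have hKz : ∀ i : Fin m, (K *ᵥ z) i = ∑ j : Fin m, k (xs i) (xs j) * z j := by
        intro i; rfl
      have hvzsum : v ⬝ᵥ z = ∑ j : Fin m, k x (xs j) * z j := rfl
      have hsym : ∀ i : Fin m, k (xs i) x = k x (xs i) := fun i => k_symm k hkpsd _ _
      simp only [dotProduct] at hvzsum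
      calc (∑ i : Fin m, z i * ((∑ j : Fin m, k (xs i) (xs j) * z j) - k (xs i) x))
            + (-1) * ((∑ j : Fin m, k x (xs j) * z j) - k x x)
          = (∑ i : Fin m, (z i * (∑ j : Fin m, k (xs i) (xs j) * z j)
              - z i * k (xs i) x))
            + (-1) * ((∑ j : Fin m, k x (xs j) * z j) - k x x) := by
            congr 1
            exact Finset.sum_congr rfl fun i _ => by ring
        _ = (∑ i : Fin m, z i * (∑ j : Fin m, k (xs i) (xs j) * z j))
            - (∑ i : Fin m, z i * k (xs i) x)
            + (-1) * ((∑ j : Fin m, k x (xs j) * z j) - k x x) := by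
            rw [Finset.sum_sub_distrib]
        _ = z ⬝ᵥ (K *ᵥ z) - 2 * (v ⬝ᵥ z) + k x x := by
            simp only [dotProduct, Matrix.mulVec, hvzsum]
            have h1 : (∑ i : Fin m, z i * k (xs i) x) = ∑ j : Fin m, k x (xs j) * z j :=
              Finset.sum_congr rfl fun i _ => by rw [hsym i]; ring
            rw [h1]
            have h2 : ∀ i : Fin m, z i * ((fun j => K i j) ⬝ᵥ z)
                = z i * (∑ j : Fin m, k (xs i) (xs j) * z j) := fun i => rfl
            simp only [dotProduct] at h2
            rw [Finset.sum_congr rfl fun i _ => (h2 i).symm]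
            ring
    rw [hexpand] at hpsd
    exact hpsd
  have hAle : v ⬝ᵥ (A⁻¹ *ᵥ v) ≤ k x x := by
    have hlz : 0 ≤ lam * (z ⬝ᵥ z) := mul_nonneg hlam.le hz2
    linarith
  linarith

/-- GP posterior variance with training inputs `xs` and regularization `lam`:
`σ²(x; xs, λ) = k(x,x) − k(x,xs)ᵀ (K(xs,xs) + λI)⁻¹ k(x,xs)`. -/
noncomputable def postVar {X : Type*} (k : X → X → ℝ) (lam : ℝ) (m : ℕ)
    (xs : Fin m → X) (x : X) : ℝ :=
  k x x - (fun i => k x (xs i)) ⬝ᵥ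
    (((Matrix.of fun i j : Fin m => k (xs i) (xs j)) +
      lam • (1 : Matrix (Fin m) (Fin m) ℝ))⁻¹ *ᵥ fun i => k x (xs i))

/-- Maximum variance reduction (MVR): if `(x_t^{MVR})` greedily maximizes the posterior
variance and the cumulative posterior variances are bounded by the information-gain bound
`2γ_M / log(1 + λ⁻¹)`, then `sup_x σ²(x; X_M^{MVR}, λ) ≤ 2γ_M/(M log(1+λ⁻¹))`, and if
`λ ≥ 1` this is at most `4λγ_M/M`. -/
theorem stmt_16 {X : Type*} [Fintype X] [Nonempty X]
    (k : X → X → ℝ)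
    (hkpsd : ∀ (m : ℕ) (xs : Fin m → X),
      (Matrix.of fun i j : Fin m => k (xs i) (xs j)).PosSemidef)
    (lam : ℝ) (hlam : 0 < lam) (M : ℕ) (hM : 0 < M)
    (seq : ℕ → X) (γ : ℝ)
    (hmvr : ∀ t < M, ∀ x : X,
      postVar k lam t (fun i => seq i) x ≤ postVar k lam t (fun i => seq i) (seq t))
    (hsum : ∑ t ∈ Finset.range M, postVar k lam t (fun i => seq i) (seq t) ≤
      2 * γ / Real.log (1 + lam⁻¹)) :
    (∀ x : X, postVar k lam M (fun i => seq i) x ≤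
        2 * γ / ((M : ℝ) * Real.log (1 + lam⁻¹))) ∧
      (1 ≤ lam → ∀ x : X, postVar k lam M (fun i => seq i) x ≤
        4 * lam * γ / (M : ℝ)) := by
  have hL : 0 < Real.log (1 + lam⁻¹) :=
    Real.log_pos (by have := inv_pos.2 hlam; linarith)
  have hMpos : (0 : ℝ) < (M : ℝ) := Nat.cast_pos.2 hM
  set L := Real.log (1 + lam⁻¹) with hLdef
  have key : ∀ x : X, postVar k lam M (fun i => seq i) x ≤ 2 * γ / ((M : ℝ) * L) := by
    intro x
    set p := postVar k lam M (fun i => seq i) x with hp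
    have hmono : ∀ t < M, p ≤ postVar k lam t (fun i => seq i) (seq t) := by
      intro t htM
      refine le_trans ?_ (hmvr t htM x)
      exact postVar_mono k hkpsd hlam (le_of_lt htM) seq x
    have hsum2 : (M : ℝ) * p ≤ ∑ t ∈ Finset.range M, postVar k lam t (fun i => seq i) (seq t) := by
      calc (M : ℝ) * p = ∑ _t ∈ Finset.range M, p := by
            rw [Finset.sum_const, Finset.card_range, nsmul_eq_mul]
        _ ≤ _ := Finset.sum_le_sum fun t htm => hmono t (Finset.mem_range.1 htm)
    have hMp : (M : ℝ) * p ≤ 2 * γ / L := le_trans hsum2 hsum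
    calc p ≤ (2 * γ / L) / (M : ℝ) := by
          rw [le_div_iff₀ hMpos]; linarith
      _ = 2 * γ / ((M : ℝ) * L) := by rw [div_div, mul_comm L]
  refine ⟨key, fun hlam1 x => ?_⟩
  have hp0 : 0 ≤ postVar k lam M (fun i => seq i) x :=
    postVar_nonneg k hkpsd hlam M (fun i => seq i) x
  have hkx := key x
  have hγ : 0 ≤ 2 * γ := by
    have h := le_trans hp0 hkx
    rw [le_div_iff₀ (mul_pos hMpos hL)] at h
    linarith
  have hLlb : 1 / (2 * lam) ≤ L := by
    have h1 := Real.one_sub_inv_le_log_of_pos (show (0:ℝ) < 1 + lam⁻¹ by positivity)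
    have h2 : 1 - (1 + lam⁻¹)⁻¹ = 1 / (lam + 1) := by
      field_simp
      ring
    have h3 : 1 / (2 * lam) ≤ 1 / (lam + 1) :=
      one_div_le_one_div_of_le (by linarith) (by linarith)
    rw [h2] at h1
    exact le_trans h3 h1
  have h2L : 1 ≤ L * (2 * lam) := by
    rw [div_le_iff₀ (by linarith : (0:ℝ) < 2 * lam)] at hLlb
    linarith
  refine le_trans hkx ?_
  rw [div_le_div_iff₀ (mul_pos hMpos hL) hMpos]
  nlinarith [mul_nonneg hγ hMpos.le, mul_nonneg (mul_nonneg hγ hMpos.le) (sub_nonneg.2 h2L)]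
end

section
/- Let Ψ̄ ∈ ℝ^{N×N}, Q an orthogonal projection with I − Q ⪯ (2λ/T)(Ψ̄Ψ̄ᵀ + (λ/T)I)⁻¹ for λ, T > 0. Then ‖Ψ̄ᵀ(Q − I_N)‖ ≤ √(2λ/T), where ‖·‖ is the spectral norm. -/
open Matrix

section Aux

variable {n : Type*} [Fintype n]

lemma aux_smul_posSemidef {c : ℝ} (hc : 0 ≤ c) {A : Matrix n n ℝ}
    (hA : A.PosSemidef) : (c • A).PosSemidef := by
  refine PosSemidef.of_dotProduct_mulVec_nonneg ?_ (fun x => ?_)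
  · show (c • A)ᴴ = c • A
    rw [conjTranspose_smul, hA.1]
    simp
  · rw [smul_mulVec, dotProduct_smul, smul_eq_mul]
    exact mul_nonneg hc (hA.dotProduct_mulVec_nonneg x)

lemma aux_smul_posDef {c : ℝ} (hc : 0 < c) {A : Matrix n n ℝ}
    (hA : A.PosDef) : (c • A).PosDef := by
  refine PosDef.of_dotProduct_mulVec_pos ?_ (fun x hx => ?_)
  · show (c • A)ᴴ = c • A
    rw [conjTranspose_smul, hA.1]
    simp
  · rw [smul_mulVec, dotProduct_smul, smul_eq_mul]
    exact mul_pos hc (hA.dotProduct_mulVec_pos hx)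

end Aux

/-- If `Q` is an orthogonal projection with `I − Q ⪯ (2λ/T)(Ψ̄Ψ̄ᵀ + (λ/T)I)⁻¹`, then the
spectral norm of `Ψ̄ᵀ(Q − I)` is at most `√(2λ/T)`, i.e.
`‖Ψ̄ᵀ(Q − I) v‖₂ ≤ √(2λ/T) ‖v‖₂` for every vector `v`. -/
theorem stmt_19 {N : ℕ} (Ψ Q : Matrix (Fin N) (Fin N) ℝ)
    (hQsymm : Qᵀ = Q) (hQidem : Q * Q = Q)
    (lam T : ℝ) (hlam : 0 < lam) (hT : 0 < T)
    (h : ((2 * lam / T) • (Ψ * Ψᵀ + (lam / T) • (1 : Matrix (Fin N) (Fin N) ℝ))⁻¹ -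
      ((1 : Matrix (Fin N) (Fin N) ℝ) - Q)).PosSemidef) :
    ∀ v : Fin N → ℝ,
      Real.sqrt (((Ψᵀ * (Q - 1)) *ᵥ v) ⬝ᵥ ((Ψᵀ * (Q - 1)) *ᵥ v)) ≤
        Real.sqrt (2 * lam / T) * Real.sqrt (v ⬝ᵥ v) := by
  intro v
  set c : ℝ := 2 * lam / T with hc_def
  have hε : 0 < lam / T := div_pos hlam hT
  have hc : 0 < c := by positivity
  set M : Matrix (Fin N) (Fin N) ℝ :=
    Ψ * Ψᵀ + (lam / T) • (1 : Matrix (Fin N) (Fin N) ℝ) with hM_def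
  set Nm : Matrix (Fin N) (Fin N) ℝ :=
    Ψᵀ * Ψ + (lam / T) • (1 : Matrix (Fin N) (Fin N) ℝ) with hN_def
  have hΨH : Ψᴴ = Ψᵀ := conjTranspose_eq_transpose_of_trivial Ψ
  have hΨtH : (Ψᵀ)ᴴ = Ψ := by
    rw [conjTranspose_eq_transpose_of_trivial, transpose_transpose]
  have hMpd : M.PosDef := by
    refine Matrix.PosDef.posSemidef_add ?_ (aux_smul_posDef hε Matrix.PosDef.one)
    simpa [hΨH] using Matrix.posSemidef_self_mul_conjTranspose Ψ
  have hNpd : Nm.PosDef := by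
    refine Matrix.PosDef.posSemidef_add ?_ (aux_smul_posDef hε Matrix.PosDef.one)
    simpa [hΨtH] using Matrix.posSemidef_self_mul_conjTranspose Ψᵀ
  have hMdet : IsUnit M.det := isUnit_iff_ne_zero.mpr hMpd.det_pos.ne'
  have hNdet : IsUnit Nm.det := isUnit_iff_ne_zero.mpr hNpd.det_pos.ne'
  -- key commutation : Ψᵀ * M⁻¹ = Nm⁻¹ * Ψᵀ
  have hkey : Nm * Ψᵀ = Ψᵀ * M := by
    rw [hM_def, hN_def, add_mul, mul_add, smul_mul_assoc, one_mul, mul_smul_comm, mul_one,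
      mul_assoc]
  have hcomm : Ψᵀ * M⁻¹ = Nm⁻¹ * Ψᵀ := by
    have h1 : Nm⁻¹ * Nm = 1 := Matrix.nonsing_inv_mul Nm hNdet
    have h2 : M * M⁻¹ = 1 := Matrix.mul_nonsing_inv M hMdet
    calc Ψᵀ * M⁻¹ = Nm⁻¹ * Nm * Ψᵀ * M⁻¹ := by rw [h1, one_mul]
      _ = Nm⁻¹ * (Ψᵀ * M) * M⁻¹ := by rw [mul_assoc Nm⁻¹ Nm Ψᵀ, hkey, mul_assoc]
      _ = Nm⁻¹ * Ψᵀ := by rw [mul_assoc, mul_assoc, h2, mul_one]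
  -- 1 - Ψᵀ M⁻¹ Ψ = (lam/T) • Nm⁻¹, hence PSD
  have hid : (1 : Matrix (Fin N) (Fin N) ℝ) - Ψᵀ * M⁻¹ * Ψ = (lam / T) • Nm⁻¹ := by
    have h1 : Nm⁻¹ * Nm = 1 := Matrix.nonsing_inv_mul Nm hNdet
    rw [hcomm, mul_assoc]
    calc (1 : Matrix (Fin N) (Fin N) ℝ) - Nm⁻¹ * (Ψᵀ * Ψ)
        = Nm⁻¹ * Nm - Nm⁻¹ * (Ψᵀ * Ψ) := by rw [h1]
      _ = Nm⁻¹ * (Nm - Ψᵀ * Ψ) := by rw [Matrix.mul_sub]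
      _ = Nm⁻¹ * ((lam / T) • 1) := by rw [hN_def, add_sub_cancel_left]
      _ = (lam / T) • Nm⁻¹ := by rw [mul_smul_comm, mul_one]
  have hS1 : ((1 : Matrix (Fin N) (Fin N) ℝ) - Ψᵀ * M⁻¹ * Ψ).PosSemidef := by
    rw [hid]
    exact aux_smul_posSemidef hε.le hNpd.inv.posSemidef
  -- conjugated hypothesis
  have hS2 : (Ψᵀ * (c • M⁻¹ - ((1 : Matrix (Fin N) (Fin N) ℝ) - Q)) * Ψ).PosSemidef := by
    have := h.conjTranspose_mul_mul_same Ψ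
    rwa [hΨH] at this
  -- main PSD bound : c • 1 - Ψᵀ (1 - Q) Ψ ⪰ 0
  have hmain : (c • (1 : Matrix (Fin N) (Fin N) ℝ)
      - Ψᵀ * ((1 : Matrix (Fin N) (Fin N) ℝ) - Q) * Ψ).PosSemidef := by
    have heq : c • (1 : Matrix (Fin N) (Fin N) ℝ)
        - Ψᵀ * ((1 : Matrix (Fin N) (Fin N) ℝ) - Q) * Ψ
        = c • ((1 : Matrix (Fin N) (Fin N) ℝ) - Ψᵀ * M⁻¹ * Ψ)
          + Ψᵀ * (c • M⁻¹ - ((1 : Matrix (Fin N) (Fin N) ℝ) - Q)) * Ψ := by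
      simp only [Matrix.mul_sub, Matrix.sub_mul, Matrix.mul_smul, Matrix.smul_mul,
        smul_sub, Matrix.mul_one, Matrix.one_mul]
      abel
    rw [heq]
    exact (aux_smul_posSemidef hc.le hS1).add hS2
  -- B := Ψᵀ (Q - 1) ; B * Bᵀ = Ψᵀ (1 - Q) Ψ
  set B : Matrix (Fin N) (Fin N) ℝ := Ψᵀ * (Q - 1) with hB_def
  have hBBt : B * Bᵀ = Ψᵀ * ((1 : Matrix (Fin N) (Fin N) ℝ) - Q) * Ψ := by
    have hQ1 : (Q - 1) * (Q - 1) = (1 : Matrix (Fin N) (Fin N) ℝ) - Q := by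
      rw [sub_mul, mul_sub, one_mul, mul_one, hQidem]
      abel
    rw [hB_def, transpose_mul, transpose_transpose, transpose_sub, hQsymm, transpose_one,
      mul_assoc Ψᵀ (Q - 1), ← mul_assoc (Q - 1) (Q - 1) Ψ, hQ1, ← mul_assoc]
  set w : Fin N → ℝ := B *ᵥ v with hw_def
  -- quadratic form bound : w ⬝ (B Bᵀ w) ≤ c * (w ⬝ w)
  have hqf : w ⬝ᵥ ((B * Bᵀ) *ᵥ w) ≤ c * (w ⬝ᵥ w) := by
    have h0 := hmain.dotProduct_mulVec_nonneg w
    rw [star_trivial, Matrix.sub_mulVec, dotProduct_sub, smul_mulVec, one_mulVec,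
      dotProduct_smul, smul_eq_mul, sub_nonneg, ← hBBt] at h0
    exact h0
  -- Cauchy–Schwarz step
  have hww : (0:ℝ) ≤ w ⬝ᵥ w := Finset.sum_nonneg fun i _ => mul_self_nonneg (w i)
  have hvv : (0:ℝ) ≤ v ⬝ᵥ v := Finset.sum_nonneg fun i _ => mul_self_nonneg (v i)
  have hCS : (w ⬝ᵥ w) ^ 2 ≤ (c * (w ⬝ᵥ w)) * (v ⬝ᵥ v) := by
    have e1 : w ⬝ᵥ w = (Bᵀ *ᵥ w) ⬝ᵥ v := by
      rw [hw_def, dotProduct_mulVec, ← mulVec_transpose]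
    have e2 : (Bᵀ *ᵥ w) ⬝ᵥ (Bᵀ *ᵥ w) = w ⬝ᵥ ((B * Bᵀ) *ᵥ w) := by
      rw [dotProduct_mulVec, vecMul_transpose, mulVec_mulVec, dotProduct_comm]
    calc (w ⬝ᵥ w) ^ 2 = ((Bᵀ *ᵥ w) ⬝ᵥ v) ^ 2 := by rw [e1]
      _ ≤ ((Bᵀ *ᵥ w) ⬝ᵥ (Bᵀ *ᵥ w)) * (v ⬝ᵥ v) := by
          simpa [dotProduct, sq] using
            Finset.sum_mul_sq_le_sq_mul_sq Finset.univ (Bᵀ *ᵥ w) v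
      _ ≤ (c * (w ⬝ᵥ w)) * (v ⬝ᵥ v) := by
          rw [e2]; exact mul_le_mul_of_nonneg_right hqf hvv
  have hfinal : w ⬝ᵥ w ≤ c * (v ⬝ᵥ v) := by
    rcases eq_or_lt_of_le hww with h0 | h0
    · rw [← h0]; positivity
    · have := hCS
      rw [sq, mul_comm c (w ⬝ᵥ w), mul_assoc] at this
      exact le_of_mul_le_mul_left this h0
  calc Real.sqrt (w ⬝ᵥ w) ≤ Real.sqrt (c * (v ⬝ᵥ v)) := Real.sqrt_le_sqrt hfinal
    _ = Real.sqrt c * Real.sqrt (v ⬝ᵥ v) := Real.sqrt_mul hc.le _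
end
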